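/- At the bottom row ℓ = 2, m₁ = 0 the diagonal dominance condition is an exact equality: a(2,0) = (1/2)·b(2,0), and both sides equal 2/(85π). (This equality shows that 36/85·(1/(8π)) is the largest constant for which the relevant quadratic form is diagonally dominant, and is the origin of the constant 36/85 in the sharpened Strichartz inequality.) -/

import Mathlib

/-- The diagonal coefficient `a(ℓ, m₁)` of the tridiagonal quadratic form. -/
noncomputable def acoef (ℓ : ℕ) (m₁ : ℤ) : ℝ :=
  (1 / (4 * Real.pi)) *
      ((ℓ : ℝ) ^ 4 + 8 * (ℓ : ℝ) ^ 3 + 11 * (ℓ : ℝ) ^ 2 - 20 * (ℓ : ℝ) - 12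
        + 6 * (m₁ : ℝ) ^ 2 + 18 * (m₁ : ℝ)) / (((ℓ : ℝ) + 1) ^ 2 * ((ℓ : ℝ) + 3) ^ 2)
    - (36 / 85) * (1 / (8 * Real.pi)) * ((ℓ : ℝ) + 2) ^ 2 / (((ℓ : ℝ) + 1) * ((ℓ : ℝ) + 3))

/-- The off-diagonal coefficient `b(ℓ, m₁)` of the tridiagonal quadratic form. -/
noncomputable def bcoef (ℓ : ℕ) (m₁ : ℤ) : ℝ :=
  Real.sqrt ((((ℓ : ℝ) + 1 - (m₁ : ℝ)) * ((ℓ : ℝ) + 4 + (m₁ : ℝ))) /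
      (((ℓ : ℝ) + 1) * ((ℓ : ℝ) + 4))) *
    ((1 / (4 * Real.pi)) * (((ℓ : ℝ) - 1) * ((ℓ : ℝ) + 6)) / (((ℓ : ℝ) + 2) * ((ℓ : ℝ) + 3))
      - (36 / 85) * (1 / (8 * Real.pi)))

theorem bcoef_zero (ℓ : ℕ) :
    bcoef ℓ 0 = (1 / (4 * Real.pi)) * (((ℓ : ℝ) - 1) * ((ℓ : ℝ) + 6)) /
      (((ℓ : ℝ) + 2) * ((ℓ : ℝ) + 3)) - (36 / 85) * (1 / (8 * Real.pi)) := by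
  have hpos : 0 < ((ℓ : ℝ) + 1) * ((ℓ : ℝ) + 4) := by positivity
  rw [bcoef, Int.cast_zero, sub_zero, add_zero, div_self hpos.ne', Real.sqrt_one, one_mul]

theorem acoef_two_zero : acoef 2 0 = 2 / (85 * Real.pi) := by
  have := Real.pi_pos
  rw [acoef]
  field_simp
  norm_num

theorem bcoef_two_zero : bcoef 2 0 = 4 / (85 * Real.pi) := by
  have := Real.pi_pos
  rw [bcoef_zero]
  field_simp
  norm_num

/-- At the bottom row `ℓ = 2`, `m₁ = 0` the diagonal dominance condition is an exact
equality: `a(2,0) = b(2,0)/2`, and both sides equal `2/(85π)`. -/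
theorem bottom_row_equality :
    acoef 2 0 = (1 / 2) * bcoef 2 0 ∧
    acoef 2 0 = 2 / (85 * Real.pi) ∧
    (1 / 2) * bcoef 2 0 = 2 / (85 * Real.pi) := by
  have half_bcoef : (1 / 2) * bcoef 2 0 = 2 / (85 * Real.pi) := by
    rw [bcoef_two_zero]; ring
  exact ⟨acoef_two_zero.trans half_bcoef.symm, acoef_two_zero, half_bcoef⟩
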